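/- Let μ > 0 and define σ̃ : Sym(3) → Sym(3) by σ̃(X) = 2μ·exp(k‖X‖² − tr X)·X. If k ≥ 3/8, then ⟨σ̃(X₁) − σ̃(X₂), X₁ − X₂⟩ ≥ 0 for all X₁, X₂ ∈ Sym(3); if k > 3/8, then ⟨σ̃(X₁) − σ̃(X₂), X₁ − X₂⟩ > 0 for all X₁, X₂ ∈ Sym(3) with X₁ ≠ X₂. -/
import Mathlib

open Matrix Real

/-- The Frobenius inner product `⟨A, B⟩ = tr(A Bᵀ)`. -/
noncomputable def minner (A B : Matrix (Fin 3) (Fin 3) ℝ) : ℝ := (A * Bᵀ).trace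

/-- The Cauchy stress of the energy `(μ/k)e^{k‖log V‖²}` as a function of the
logarithmic strain `X = log V`: `σ̃(X) = 2μ·e^{k‖X‖² − trX}·X`. -/
noncomputable def sigmaTilde (μ k : ℝ) (X : Matrix (Fin 3) (Fin 3) ℝ) :
    Matrix (Fin 3) (Fin 3) ℝ :=
  (2 * μ * Real.exp (k * minner X X - X.trace)) • X

/-- Key inequality: `2(e^u - 1) ≤ u(e^u + 1)` for `u ≥ 0` (trapezoid bound). -/
lemma hh_aux (u : ℝ) (hu : 0 ≤ u) : 2 * (Real.exp u - 1) ≤ u * (Real.exp u + 1) := by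
  have hd : ∀ x : ℝ, HasDerivAt (fun v : ℝ => v * (Real.exp v + 1) - 2 * (Real.exp v - 1))
      (1 * (Real.exp x + 1) + x * Real.exp x - 2 * Real.exp x) x := by
    intro x
    have h2 : HasDerivAt Real.exp (Real.exp x) x := Real.hasDerivAt_exp x
    have h4 := (hasDerivAt_id x).mul (h2.add_const 1)
    have h5 : HasDerivAt (fun v : ℝ => 2 * (Real.exp v - 1)) (2 * Real.exp x) x :=
      (h2.sub_const 1).const_mul 2
    exact h4.sub h5
  have hmono : MonotoneOn (fun v : ℝ => v * (Real.exp v + 1) - 2 * (Real.exp v - 1))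
      (Set.Ici 0) := by
    apply monotoneOn_of_deriv_nonneg (convex_Ici 0)
    · exact (by continuity : Continuous fun v : ℝ =>
        v * (Real.exp v + 1) - 2 * (Real.exp v - 1)).continuousOn
    · intro x _
      exact (hd x).differentiableAt.differentiableWithinAt
    · intro x hx
      rw [(hd x).deriv]
      have h2 : Real.exp (-x) * Real.exp x = 1 := by rw [← Real.exp_add]; norm_num
      have h := mul_le_mul_of_nonneg_right (Real.add_one_le_exp (-x)) (Real.exp_pos x).le
      nlinarith [h, h2]
  have h0 := hmono (Set.self_mem_Ici) (Set.mem_Ici.2 hu) hu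
  simp only [Real.exp_zero] at h0
  nlinarith [h0]

/-- Hermite–Hadamard-type: `2|e^a - e^b| ≤ (e^a + e^b)|a - b|`. -/
lemma hh_abs (a b : ℝ) : 2 * |Real.exp a - Real.exp b| ≤ (Real.exp a + Real.exp b) * |a - b| := by
  wlog h : b ≤ a with H
  · rw [abs_sub_comm, abs_sub_comm a b, add_comm]
    exact H b a (le_of_not_ge h)
  · have key := hh_aux (a - b) (by linarith)
    have hab : Real.exp b * Real.exp (a - b) = Real.exp a := by
      rw [← Real.exp_add]; ring_nf
    rw [abs_of_nonneg (sub_nonneg.2 (Real.exp_le_exp.2 h)), abs_of_nonneg (sub_nonneg.2 h)]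
    nlinarith [key, hab, Real.exp_pos b]

lemma exp_sub_sign (a b : ℝ) : 0 ≤ (Real.exp a - Real.exp b) * (a - b) := by
  rcases le_total b a with h | h
  · exact mul_nonneg (sub_nonneg.2 (Real.exp_le_exp.2 h)) (sub_nonneg.2 h)
  · have h1 : Real.exp a - Real.exp b ≤ 0 := sub_nonpos.2 (Real.exp_le_exp.2 h)
    nlinarith [h1]

lemma core (k S N Δ δ t : ℝ) (hk : 3 / 8 ≤ k) (hN : 0 ≤ N) (hS : 0 < S)
    (ht : t ^ 2 ≤ 3 * N) (hsign : 0 ≤ Δ * δ) (hhh : 2 * |Δ| ≤ S * |δ|) :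
    0 ≤ k * S * N + Δ * δ + Δ * t := by
  have h1 : |Δ| * |δ| = Δ * δ := by rw [← abs_mul]; exact abs_of_nonneg hsign
  have h2 : -(|Δ| * |t|) ≤ Δ * t := by rw [← abs_mul]; exact neg_abs_le _
  have ht' : |t| ^ 2 ≤ 3 * N := by rwa [sq_abs]
  have hP : 0 ≤ |Δ| := abs_nonneg _
  rcases le_or_gt |t| |δ| with h | h
  · have h3 : |Δ| * |t| ≤ |Δ| * |δ| := mul_le_mul_of_nonneg_left h hP
    nlinarith [mul_nonneg (mul_nonneg (by linarith : (0:ℝ) ≤ k) hS.le) hN]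
  · nlinarith [mul_nonneg hS.le (sq_nonneg (|t| - 2 * |δ|)),
      mul_nonneg (by linarith : (0:ℝ) ≤ S * |δ| - 2 * |Δ|) (by linarith : (0:ℝ) ≤ |t| - |δ|),
      mul_nonneg (mul_nonneg hS.le hN) (by linarith : (0:ℝ) ≤ k - 3 / 8),
      mul_le_mul_of_nonneg_left ht' hS.le, abs_nonneg δ, abs_nonneg t]

lemma core_strict (k S N Δ δ t : ℝ) (hk : 3 / 8 < k) (hN : 0 < N) (hS : 0 < S)
    (ht : t ^ 2 ≤ 3 * N) (hsign : 0 ≤ Δ * δ) (hhh : 2 * |Δ| ≤ S * |δ|) :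
    0 < k * S * N + Δ * δ + Δ * t := by
  have h1 : |Δ| * |δ| = Δ * δ := by rw [← abs_mul]; exact abs_of_nonneg hsign
  have h2 : -(|Δ| * |t|) ≤ Δ * t := by rw [← abs_mul]; exact neg_abs_le _
  have ht' : |t| ^ 2 ≤ 3 * N := by rwa [sq_abs]
  have hP : 0 ≤ |Δ| := abs_nonneg _
  rcases le_or_gt |t| |δ| with h | h
  · have h3 : |Δ| * |t| ≤ |Δ| * |δ| := mul_le_mul_of_nonneg_left h hP
    nlinarith [mul_pos (mul_pos (by linarith : (0:ℝ) < k) hS) hN]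
  · nlinarith [mul_nonneg hS.le (sq_nonneg (|t| - 2 * |δ|)),
      mul_nonneg (by linarith : (0:ℝ) ≤ S * |δ| - 2 * |Δ|) (by linarith : (0:ℝ) ≤ |t| - |δ|),
      mul_pos (mul_pos hS hN) (by linarith : (0:ℝ) < k - 3 / 8),
      mul_le_mul_of_nonneg_left ht' hS.le, abs_nonneg δ, abs_nonneg t]

lemma minner_eq_sum (A B : Matrix (Fin 3) (Fin 3) ℝ) :
    minner A B = ∑ i, ∑ j, A i j * B i j := by
  simp [minner, Matrix.trace, Matrix.diag, Matrix.mul_apply, Matrix.transpose_apply]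

lemma minner_comm (A B : Matrix (Fin 3) (Fin 3) ℝ) : minner A B = minner B A := by
  simp [minner_eq_sum, mul_comm]

lemma minner_sub_left (A B C : Matrix (Fin 3) (Fin 3) ℝ) :
    minner (A - B) C = minner A C - minner B C := by
  simp [minner_eq_sum, Matrix.sub_apply, sub_mul, Finset.sum_sub_distrib]

lemma minner_sub_right (A B C : Matrix (Fin 3) (Fin 3) ℝ) :
    minner A (B - C) = minner A B - minner A C := by
  simp [minner_eq_sum, Matrix.sub_apply, mul_sub, Finset.sum_sub_distrib]

lemma minner_smul_left (c : ℝ) (A B : Matrix (Fin 3) (Fin 3) ℝ) :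
    minner (c • A) B = c * minner A B := by
  simp [minner_eq_sum, Matrix.smul_apply, smul_eq_mul, Finset.mul_sum, mul_assoc]

lemma minner_self_nonneg (A : Matrix (Fin 3) (Fin 3) ℝ) : 0 ≤ minner A A := by
  rw [minner_eq_sum]
  exact Finset.sum_nonneg fun i _ => Finset.sum_nonneg fun j _ => mul_self_nonneg _

lemma minner_self_pos (A : Matrix (Fin 3) (Fin 3) ℝ) (h : A ≠ 0) : 0 < minner A A := by
  obtain ⟨i, j, hij⟩ : ∃ i j, A i j ≠ 0 := by
    by_contra hc; push_neg at hc
    exact h (by ext i j; simp [hc])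
  rw [minner_eq_sum]
  refine Finset.sum_pos' (fun i _ => Finset.sum_nonneg fun j _ => mul_self_nonneg _)
    ⟨i, Finset.mem_univ i, ?_⟩
  exact Finset.sum_pos' (fun j _ => mul_self_nonneg _)
    ⟨j, Finset.mem_univ j, mul_self_pos.2 hij⟩

lemma trace_sq_le (D : Matrix (Fin 3) (Fin 3) ℝ) : D.trace ^ 2 ≤ 3 * minner D D := by
  rw [minner_eq_sum, Matrix.trace_fin_three, Fin.sum_univ_three]
  simp only [Fin.sum_univ_three]
  nlinarith [sq_nonneg (D 0 0 - D 1 1), sq_nonneg (D 0 0 - D 2 2), sq_nonneg (D 1 1 - D 2 2),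
    mul_self_nonneg (D 0 1), mul_self_nonneg (D 0 2), mul_self_nonneg (D 1 0),
    mul_self_nonneg (D 1 2), mul_self_nonneg (D 2 0), mul_self_nonneg (D 2 1)]

lemma glue (μ k p q r t₁ t₂ : ℝ) (hk : 0 < k) :
    2 * μ * Real.exp (k * p - t₁) * (p - r) - 2 * μ * Real.exp (k * q - t₂) * (r - q)
    = (μ / k) * (k * (Real.exp (k * p - t₁) + Real.exp (k * q - t₂)) * (p - 2 * r + q)
        + (Real.exp (k * p - t₁) - Real.exp (k * q - t₂)) * ((k * p - t₁) - (k * q - t₂))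
        + (Real.exp (k * p - t₁) - Real.exp (k * q - t₂)) * (t₁ - t₂)) := by
  field_simp
  ring

lemma hE (μ k : ℝ) (X₁ X₂ : Matrix (Fin 3) (Fin 3) ℝ) :
    minner (sigmaTilde μ k X₁ - sigmaTilde μ k X₂) (X₁ - X₂)
    = 2 * μ * Real.exp (k * minner X₁ X₁ - X₁.trace) * (minner X₁ X₁ - minner X₁ X₂)
      - 2 * μ * Real.exp (k * minner X₂ X₂ - X₂.trace) * (minner X₁ X₂ - minner X₂ X₂) := by
  simp only [sigmaTilde, minner_sub_left, minner_sub_right, minner_smul_left,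
    minner_comm X₂ X₁]
  ring

lemma hNexp (X₁ X₂ : Matrix (Fin 3) (Fin 3) ℝ) :
    minner (X₁ - X₂) (X₁ - X₂)
    = minner X₁ X₁ - 2 * minner X₁ X₂ + minner X₂ X₂ := by
  simp only [minner_sub_left, minner_sub_right, minner_comm X₂ X₁]
  ring

/-- True-stress–true-strain monotonicity for `σ̃`: for `μ > 0` it is monotone on
`Sym(3)` if `k ≥ 3/8`, and strictly monotone if `k > 3/8`. -/
theorem sigmaTilde_monotone (μ k : ℝ) (hμ : 0 < μ) :
    ((3 / 8 : ℝ) ≤ k →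
      ∀ X₁ X₂ : Matrix (Fin 3) (Fin 3) ℝ, X₁.IsSymm → X₂.IsSymm →
        0 ≤ minner (sigmaTilde μ k X₁ - sigmaTilde μ k X₂) (X₁ - X₂)) ∧
    ((3 / 8 : ℝ) < k →
      ∀ X₁ X₂ : Matrix (Fin 3) (Fin 3) ℝ, X₁.IsSymm → X₂.IsSymm → X₁ ≠ X₂ →
        0 < minner (sigmaTilde μ k X₁ - sigmaTilde μ k X₂) (X₁ - X₂)) := by
  constructor
  · intro hk3 X₁ X₂ _ _
    have hk : (0:ℝ) < k := lt_of_lt_of_le (by norm_num) hk3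
    have htr : (X₁ - X₂).trace = X₁.trace - X₂.trace := Matrix.trace_sub X₁ X₂
    have ht : (X₁.trace - X₂.trace) ^ 2 ≤ 3 * minner (X₁ - X₂) (X₁ - X₂) := by
      have := trace_sq_le (X₁ - X₂); rwa [htr] at this
    have hcore := core k
      (Real.exp (k * minner X₁ X₁ - X₁.trace) + Real.exp (k * minner X₂ X₂ - X₂.trace))
      (minner (X₁ - X₂) (X₁ - X₂))
      (Real.exp (k * minner X₁ X₁ - X₁.trace) - Real.exp (k * minner X₂ X₂ - X₂.trace))
      ((k * minner X₁ X₁ - X₁.trace) - (k * minner X₂ X₂ - X₂.trace))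
      (X₁.trace - X₂.trace) hk3 (minner_self_nonneg _) (by positivity) ht
      (exp_sub_sign _ _) (hh_abs _ _)
    rw [hNexp] at hcore
    rw [hE μ k X₁ X₂, glue μ k (minner X₁ X₁) (minner X₂ X₂) (minner X₁ X₂)
      X₁.trace X₂.trace hk]
    exact mul_nonneg (div_nonneg hμ.le hk.le) hcore
  · intro hk3 X₁ X₂ _ _ hne
    have hk : (0:ℝ) < k := lt_trans (by norm_num) hk3
    have htr : (X₁ - X₂).trace = X₁.trace - X₂.trace := Matrix.trace_sub X₁ X₂
    have ht : (X₁.trace - X₂.trace) ^ 2 ≤ 3 * minner (X₁ - X₂) (X₁ - X₂) := by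
      have := trace_sq_le (X₁ - X₂); rwa [htr] at this
    have hcore := core_strict k
      (Real.exp (k * minner X₁ X₁ - X₁.trace) + Real.exp (k * minner X₂ X₂ - X₂.trace))
      (minner (X₁ - X₂) (X₁ - X₂))
      (Real.exp (k * minner X₁ X₁ - X₁.trace) - Real.exp (k * minner X₂ X₂ - X₂.trace))
      ((k * minner X₁ X₁ - X₁.trace) - (k * minner X₂ X₂ - X₂.trace))
      (X₁.trace - X₂.trace) hk3 (minner_self_pos _ (sub_ne_zero.2 hne)) (by positivity) ht
      (exp_sub_sign _ _) (hh_abs _ _)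
    rw [hNexp] at hcore
    rw [hE μ k X₁ X₂, glue μ k (minner X₁ X₁) (minner X₂ X₂) (minner X₁ X₂)
      X₁.trace X₂.trace hk]
    exact mul_pos (div_pos hμ hk) hcore
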